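/- arXiv:0807.4107 — 4 statements merged into one kernel-verified Lean document; each statement's English description precedes it below -/
import Mathlib

section
/- Let t, r, φ, z : ℝ → ℝ be twice-differentiable functions with r(u) > 0 for all u. Then (t, r, φ, z) is a geodesic of Gödel's universe if and only if the functions u ↦ P_{ρ₁,ρ₂}(u) for all ρ₁, ρ₂ ∈ ℝ, u ↦ C₁(u), u ↦ C₂(u), and u ↦ z'(u) are constant on ℝ. -/
open Real

/-- A function is twice differentiable (everywhere on ℝ). -/
def TwiceDiff (f : ℝ → ℝ) : Prop :=
  Differentiable ℝ f ∧ Differentiable ℝ (deriv f)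

/-- The four geodesic differential equations of Gödel's universe in
cylindrical coordinates. -/
def GodelGeodesicEqns (t r φ z : ℝ → ℝ) : Prop :=
  ∀ u : ℝ,
    (deriv (deriv t) u + 4 * Real.tanh (r u) * deriv t u * deriv r u
      + 2 * Real.sqrt 2 * (Real.sinh (r u) ^ 3 / Real.cosh (r u)) * deriv φ u * deriv r u = 0)
    ∧ (deriv (deriv r) u
      + 2 * Real.sqrt 2 * Real.sinh (r u) * Real.cosh (r u) * deriv t u * deriv φ u
      + Real.sinh (r u) * Real.cosh (r u) * (2 * Real.cosh (r u) ^ 2 - 3) * (deriv φ u) ^ 2 = 0)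
    ∧ (deriv (deriv φ) u * Real.sinh (r u) * Real.cosh (r u)
      - 2 * Real.sqrt 2 * deriv t u * deriv r u + 2 * deriv φ u * deriv r u = 0)
    ∧ (deriv (deriv z) u = 0)

/-- The conserved momentum quantity `P_{ρ₁,ρ₂}` along a curve. -/
noncomputable def godelP (t r φ : ℝ → ℝ) (ρ₁ ρ₂ : ℝ) (u : ℝ) : ℝ :=
  (ρ₂ + ρ₁ * Real.cosh (r u) ^ 2 / 2) * deriv t u
    + ((ρ₁ * Real.cosh (r u) ^ 2 + 4 * ρ₂) * Real.sinh (r u) ^ 2 / (2 * Real.sqrt 2)) * deriv φ u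

/-- The conserved quantity `C₁` along a curve. -/
noncomputable def godelC1 (t r φ : ℝ → ℝ) (u : ℝ) : ℝ :=
  -(Real.sqrt 2) * Real.cos (φ u) * Real.sinh (2 * r u) * deriv t u
    + Real.sin (φ u) * deriv r u
    - Real.cos (φ u) * (Real.cosh (2 * r u) - 2) * Real.sinh (2 * r u) / 2 * deriv φ u

/-- The conserved quantity `C₂` along a curve. -/
noncomputable def godelC2 (t r φ : ℝ → ℝ) (u : ℝ) : ℝ :=
  Real.sqrt 2 * Real.sin (φ u) * Real.sinh (2 * r u) * deriv t u
    + Real.cos (φ u) * deriv r u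
    + Real.sin (φ u) * (Real.cosh (2 * r u) - 2) * Real.sinh (2 * r u) / 2 * deriv φ u


/-!
The quantities `P_{ρ₁,ρ₂}`, `C₁`, `C₂` are the momenta of Killing fields of the Gödel metric:
along any curve, their derivatives are explicit combinations of the left-hand sides of the
`t`-, `r`- and `φ`-geodesic equations, so they are constant along geodesics. Conversely,
`P'_{1,0}` and `P'_{0,1}` form a linear system in the `t`- and `φ`-equations whose determinant
is a nonzero multiple of `sinh r`, which vanishes nowhere when `r > 0`; once those two equations
hold, `sin φ · C₁' + cos φ · C₂'` is the `r`-equation.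
-/

theorem is_const_iff_of_hasDerivAt {f f' : ℝ → ℝ} (hf : ∀ u, HasDerivAt f (f' u) u) :
    (∀ u u₀, f u = f u₀) ↔ ∀ u, f' u = 0 := by
  refine ⟨fun h u => (hf u).unique ?_, fun h => is_const_of_deriv_eq_zero
    (fun u => (hf u).differentiableAt) fun u => (hf u).deriv.trans (h u)⟩
  exact (hasDerivAt_const u (f 0)).congr_of_eventuallyEq (.of_forall fun x => h x 0)

theorem eq_zero_of_forall_momentum_combination_eq_zero {c k a b : ℝ} (hc : c ≠ 0) (hk : k ≠ 0)
    (h : ∀ ρ₁ ρ₂ : ℝ, (ρ₂ + ρ₁ * c ^ 2 / 2) * a + (ρ₁ * c ^ 2 + 4 * ρ₂) * k * b = 0) :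
    a = 0 ∧ b = 0 := by
  have hb : c ^ 2 * k * b = 0 := by linear_combination (c ^ 2 * h 0 1 - 2 * h 1 0) / 2
  have hb : b = 0 := by simpa [hc, hk] using hb
  exact ⟨by simpa [hb] using h 0 1, hb⟩

variable {t r φ : ℝ → ℝ}

noncomputable def godelGeodesicT (t r φ : ℝ → ℝ) (u : ℝ) : ℝ :=
  deriv (deriv t) u + 4 * tanh (r u) * deriv t u * deriv r u
    + 2 * √2 * (sinh (r u) ^ 3 / cosh (r u)) * deriv φ u * deriv r u

noncomputable def godelGeodesicR (t r φ : ℝ → ℝ) (u : ℝ) : ℝ :=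
  deriv (deriv r) u
    + 2 * √2 * sinh (r u) * cosh (r u) * deriv t u * deriv φ u
    + sinh (r u) * cosh (r u) * (2 * cosh (r u) ^ 2 - 3) * (deriv φ u) ^ 2

noncomputable def godelGeodesicPhi (t r φ : ℝ → ℝ) (u : ℝ) : ℝ :=
  deriv (deriv φ) u * sinh (r u) * cosh (r u)
    - 2 * √2 * deriv t u * deriv r u + 2 * deriv φ u * deriv r u

theorem godelGeodesicEqns_iff {z : ℝ → ℝ} :
    GodelGeodesicEqns t r φ z ↔ ∀ u, godelGeodesicT t r φ u = 0 ∧ godelGeodesicR t r φ u = 0 ∧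
      godelGeodesicPhi t r φ u = 0 ∧ deriv (deriv z) u = 0 :=
  Iff.rfl

theorem hasDerivAt_godelP {u : ℝ} (ht : DifferentiableAt ℝ (deriv t) u)
    (hr : DifferentiableAt ℝ r u) (hφ : DifferentiableAt ℝ (deriv φ) u) (ρ₁ ρ₂ : ℝ) :
    HasDerivAt (godelP t r φ ρ₁ ρ₂)
      ((ρ₂ + ρ₁ * cosh (r u) ^ 2 / 2) * godelGeodesicT t r φ u
        + (ρ₁ * cosh (r u) ^ 2 + 4 * ρ₂) * (sinh (r u) / (2 * √2 * cosh (r u)))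
          * godelGeodesicPhi t r φ u) u := by
  have hc := hr.hasDerivAt.cosh
  have hs := hr.hasDerivAt.sinh
  have h₁ := ((((hc.pow 2).const_mul ρ₁).div_const 2).const_add ρ₂).mul ht.hasDerivAt
  have h₂ := (((((hc.pow 2).const_mul ρ₁).add_const (4 * ρ₂)).mul (hs.pow 2)).div_const
      (2 * √2)).mul hφ.hasDerivAt
  refine (h₁.add h₂).congr_deriv ?_
  have hc0 := (cosh_pos (r u)).ne'
  simp only [godelGeodesicT, godelGeodesicPhi, tanh_eq_sinh_div_cosh, Pi.mul_apply, Pi.pow_apply]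
  field_simp
  linear_combination
    -4 * (ρ₂ + ρ₁ * cosh (r u) ^ 2 / 2) * sinh (r u) ^ 3 * deriv φ u * deriv r u
        * sq_sqrt zero_le_two
      + 2 * (ρ₁ * cosh (r u) ^ 2 + 4 * ρ₂) * sinh (r u) * deriv φ u * deriv r u * cosh_sq (r u)

theorem hasDerivAt_godelC1 {u : ℝ} (ht : DifferentiableAt ℝ (deriv t) u)
    (hr : DifferentiableAt ℝ r u) (hr' : DifferentiableAt ℝ (deriv r) u)
    (hφ : DifferentiableAt ℝ φ u) (hφ' : DifferentiableAt ℝ (deriv φ) u) :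
    HasDerivAt (godelC1 t r φ)
      (-(2 * √2 * sinh (r u) * cosh (r u) * cos (φ u)) * godelGeodesicT t r φ u
        + sin (φ u) * godelGeodesicR t r φ u
        - (2 * cosh (r u) ^ 2 - 3) * cos (φ u) * godelGeodesicPhi t r φ u) u := by
  have h2r := hr.hasDerivAt.const_mul (2 : ℝ)
  have h₁ := ((hφ.hasDerivAt.cos.const_mul (-√2)).mul h2r.sinh).mul ht.hasDerivAt
  have h₂ := hφ.hasDerivAt.sin.mul hr'.hasDerivAt
  have h₃ := (((hφ.hasDerivAt.cos.mul (h2r.cosh.sub_const 2)).mul h2r.sinh).div_const 2).mul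
    hφ'.hasDerivAt
  refine ((h₁.add h₂).sub h₃).congr_deriv ?_
  have hc0 := (cosh_pos (r u)).ne'
  simp only [godelGeodesicT, godelGeodesicR, godelGeodesicPhi, tanh_eq_sinh_div_cosh,
    sinh_two_mul, cosh_two_mul, Pi.mul_apply]
  field_simp
  linear_combination 4 * sinh (r u) ^ 4 * cos (φ u) * deriv r u * deriv φ u * sq_sqrt zero_le_two
    + ((5 - cosh (r u) ^ 2 - 7 * sinh (r u) ^ 2) * cos (φ u) * deriv r u * deriv φ u
      + sinh (r u) * cosh (r u) * (cos (φ u) * deriv (deriv φ) u - sin (φ u) * deriv φ u ^ 2)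
      - 6 * √2 * cos (φ u) * deriv t u * deriv r u) * cosh_sq (r u)

theorem hasDerivAt_godelC2 {u : ℝ} (ht : DifferentiableAt ℝ (deriv t) u)
    (hr : DifferentiableAt ℝ r u) (hr' : DifferentiableAt ℝ (deriv r) u)
    (hφ : DifferentiableAt ℝ φ u) (hφ' : DifferentiableAt ℝ (deriv φ) u) :
    HasDerivAt (godelC2 t r φ)
      (2 * √2 * sinh (r u) * cosh (r u) * sin (φ u) * godelGeodesicT t r φ u
        + cos (φ u) * godelGeodesicR t r φ u
        + (2 * cosh (r u) ^ 2 - 3) * sin (φ u) * godelGeodesicPhi t r φ u) u := by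
  have h2r := hr.hasDerivAt.const_mul (2 : ℝ)
  have h₁ := ((hφ.hasDerivAt.sin.const_mul √2).mul h2r.sinh).mul ht.hasDerivAt
  have h₂ := hφ.hasDerivAt.cos.mul hr'.hasDerivAt
  have h₃ := (((hφ.hasDerivAt.sin.mul (h2r.cosh.sub_const 2)).mul h2r.sinh).div_const 2).mul
    hφ'.hasDerivAt
  refine ((h₁.add h₂).add h₃).congr_deriv ?_
  have hc0 := (cosh_pos (r u)).ne'
  simp only [godelGeodesicT, godelGeodesicR, godelGeodesicPhi, tanh_eq_sinh_div_cosh,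
    sinh_two_mul, cosh_two_mul, Pi.mul_apply]
  field_simp
  linear_combination -4 * sinh (r u) ^ 4 * sin (φ u) * deriv r u * deriv φ u * sq_sqrt zero_le_two
    - ((5 - cosh (r u) ^ 2 - 7 * sinh (r u) ^ 2) * sin (φ u) * deriv r u * deriv φ u
      + sinh (r u) * cosh (r u) * (sin (φ u) * deriv (deriv φ) u + cos (φ u) * deriv φ u ^ 2)
      - 6 * √2 * sin (φ u) * deriv t u * deriv r u) * cosh_sq (r u)

/-- A twice-differentiable curve with positive radial coordinate is a
geodesic of Gödel's universe if and only if all the momenta `P_{ρ₁,ρ₂}`, the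
quantities `C₁`, `C₂` and `z'` are constant. -/
theorem godel_geodesic_iff_conserved (t r φ z : ℝ → ℝ)
    (ht : TwiceDiff t) (hr : TwiceDiff r) (hφ : TwiceDiff φ) (hz : TwiceDiff z)
    (hrpos : ∀ u, 0 < r u) :
    GodelGeodesicEqns t r φ z ↔
      ((∀ (ρ₁ ρ₂ : ℝ) (u u₀ : ℝ), godelP t r φ ρ₁ ρ₂ u = godelP t r φ ρ₁ ρ₂ u₀)
        ∧ (∀ u u₀ : ℝ, godelC1 t r φ u = godelC1 t r φ u₀)
        ∧ (∀ u u₀ : ℝ, godelC2 t r φ u = godelC2 t r φ u₀)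
        ∧ (∀ u u₀ : ℝ, deriv z u = deriv z u₀)) := by
  have hP_const (ρ₁ ρ₂ : ℝ) := is_const_iff_of_hasDerivAt fun u =>
    hasDerivAt_godelP (ht.2 u) (hr.1 u) (hφ.2 u) ρ₁ ρ₂
  simp only [godelGeodesicEqns_iff, hP_const,
    is_const_iff_of_hasDerivAt fun u =>
      hasDerivAt_godelC1 (ht.2 u) (hr.1 u) (hr.2 u) (hφ.1 u) (hφ.2 u),
    is_const_iff_of_hasDerivAt fun u =>
      hasDerivAt_godelC2 (ht.2 u) (hr.1 u) (hr.2 u) (hφ.1 u) (hφ.2 u),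
    is_const_iff_of_hasDerivAt fun u => (hz.2 u).hasDerivAt]
  constructor
  · intro h
    refine ⟨fun ρ₁ ρ₂ u => ?_, fun u => ?_, fun u => ?_, fun u => (h u).2.2.2⟩ <;>
      simp [(h u).1, (h u).2.1, (h u).2.2.1]
  · rintro ⟨hP, hC₁, hC₂, hz'⟩ u
    have hk : sinh (r u) / (2 * √2 * cosh (r u)) ≠ 0 :=
      (div_pos (sinh_pos_iff.2 (hrpos u)) (by positivity)).ne'
    obtain ⟨hT, hΦ⟩ := eq_zero_of_forall_momentum_combination_eq_zero (cosh_pos (r u)).ne' hk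
      fun ρ₁ ρ₂ => hP ρ₁ ρ₂ u
    have h₁ := hC₁ u
    have h₂ := hC₂ u
    rw [hT, hΦ] at h₁ h₂
    refine ⟨hT, ?_, hΦ, hz' u⟩
    linear_combination
      sin (φ u) * h₁ + cos (φ u) * h₂ - godelGeodesicR t r φ u * sin_sq_add_cos_sq (φ u)
end

section
/- Let t, r, φ, z : ℝ → ℝ be a geodesic of Gödel's universe, and fix u₀ ∈ ℝ. Set A = P_{2,0}(u₀) and B = P_{0,1}(u₀). If A ≥ 0 and B ≤ 0, then t'(u) ≥ 0 for every u ∈ ℝ. -/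
open Real

/-!
Every `P_{ρ₁,ρ₂}` is a first integral of the geodesic equations: `cosh r · P'` is a linear
combination of the `t`- and `φ`-equations, up to `cosh² r - sinh² r = 1` and `√2 ^ 2 = 2`.
Along any curve `P_{2,0} - (cosh² r / 2) · P_{0,1} = (cosh² r / 2) · t'`, and by conservation the
left side is `A - (cosh² r / 2) · B ≥ 0`.
-/

theorem godelP_two_zero_sub_cosh_sq_mul_godelP_zero_one (t r φ : ℝ → ℝ) (u : ℝ) :
    godelP t r φ 2 0 u - cosh (r u) ^ 2 / 2 * godelP t r φ 0 1 u
      = cosh (r u) ^ 2 / 2 * deriv t u := by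
  unfold godelP
  field_simp
  ring

theorem hasDerivAt_godelP_of_geodesic {t r φ z : ℝ → ℝ} (ht : Differentiable ℝ (deriv t))
    (hr : Differentiable ℝ r) (hφ : Differentiable ℝ (deriv φ))
    (hgeo : GodelGeodesicEqns t r φ z) (ρ₁ ρ₂ u : ℝ) :
    HasDerivAt (godelP t r φ ρ₁ ρ₂) 0 u := by
  have hR : HasDerivAt r (deriv r u) u := (hr u).hasDerivAt
  have hc2 := hR.cosh.pow 2
  have hs2 := hR.sinh.pow 2
  have H := (((hasDerivAt_const u ρ₂).add ((hc2.const_mul ρ₁).div_const 2)).mul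
    (ht u).hasDerivAt).add (((((hc2.const_mul ρ₁).add_const (4 * ρ₂)).mul hs2).div_const
    (2 * √2)).mul (hφ u).hasDerivAt)
  refine H.congr_deriv ?_
  obtain ⟨ht₂, -, hφ₂, -⟩ := hgeo u
  have hc : cosh (r u) ≠ 0 := (cosh_pos _).ne'
  have hq : √2 ^ 2 = 2 := sq_sqrt zero_le_two
  have hinv : (√2)⁻¹ = √2 / 2 := sqrt_div_self.symm
  rw [tanh_eq_sinh_div_cosh] at ht₂
  field_simp at ht₂
  simp only [Pi.add_apply, Pi.mul_apply, Pi.pow_apply, div_eq_mul_inv, mul_inv, hinv]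
  push_cast
  rw [← mul_right_inj' hc, mul_zero]
  linear_combination (ρ₂ + ρ₁ * cosh (r u) ^ 2 / 2) * ht₂
    + ((ρ₁ * cosh (r u) ^ 2 + 4 * ρ₂) * sinh (r u) * √2 / 4) * hφ₂
    + ((ρ₁ * cosh (r u) ^ 2 + 4 * ρ₂) * sinh (r u) * deriv r u * deriv t u / 2) * hq
    + ((ρ₁ * cosh (r u) ^ 2 + 4 * ρ₂) * sinh (r u) * deriv r u * √2 * deriv φ u / 2)
      * cosh_sq (r u)

theorem godelP_eq_of_geodesic {t r φ z : ℝ → ℝ} (ht : Differentiable ℝ (deriv t))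
    (hr : Differentiable ℝ r) (hφ : Differentiable ℝ (deriv φ))
    (hgeo : GodelGeodesicEqns t r φ z) (ρ₁ ρ₂ u v : ℝ) :
    godelP t r φ ρ₁ ρ₂ u = godelP t r φ ρ₁ ρ₂ v :=
  have hP := hasDerivAt_godelP_of_geodesic ht hr hφ hgeo ρ₁ ρ₂
  is_const_of_deriv_eq_zero (fun x => (hP x).differentiableAt) (fun x => (hP x).deriv) u v

theorem godel_tdot_nonneg_general (t r φ z : ℝ → ℝ)
    (ht : TwiceDiff t) (hr : TwiceDiff r) (hφ : TwiceDiff φ)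
    (hgeo : GodelGeodesicEqns t r φ z)
    (u₀ : ℝ) (A B : ℝ)
    (hA : A = godelP t r φ 2 0 u₀) (hB : B = godelP t r φ 0 1 u₀)
    (hA0 : 0 ≤ A) (hB0 : B ≤ 0) :
    ∀ u : ℝ, 0 ≤ deriv t u := by
  intro u
  have hconst := godelP_eq_of_geodesic ht.2 hr.1 hφ.2 hgeo
  have hcosh : 0 < cosh (r u) ^ 2 / 2 := by positivity
  have key : 0 ≤ cosh (r u) ^ 2 / 2 * deriv t u := by
    rw [← godelP_two_zero_sub_cosh_sq_mul_godelP_zero_one, hconst 2 0 u u₀, hconst 0 1 u u₀,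
      ← hA, ← hB]
    nlinarith
  exact nonneg_of_mul_nonneg_right key hcosh

/-- If `A = P_{2,0}(u₀) ≥ 0` and `B = P_{0,1}(u₀) ≤ 0`, then `t' ≥ 0`
everywhere along the geodesic. -/
theorem godel_tdot_nonneg (t r φ z : ℝ → ℝ)
    (ht : TwiceDiff t) (hr : TwiceDiff r) (hφ : TwiceDiff φ) (hz : TwiceDiff z)
    (hrpos : ∀ u, 0 < r u)
    (hgeo : GodelGeodesicEqns t r φ z)
    (u₀ : ℝ) (A B : ℝ)
    (hA : A = godelP t r φ 2 0 u₀) (hB : B = godelP t r φ 0 1 u₀)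
    (hA0 : 0 ≤ A) (hB0 : B ≤ 0) :
    ∀ u : ℝ, 0 ≤ deriv t u :=
  godel_tdot_nonneg_general t r φ z ht hr hφ hgeo u₀ A B hA hB hA0 hB0
end

section
/- Let t, r, φ, z : ℝ → ℝ be a geodesic of Gödel's universe, fix u₀ ∈ ℝ, and set A = P_{2,0}(u₀), B = P_{0,1}(u₀). Assume B > 0 and 2A/B ≥ 1, and let R_t = arcosh(√(2A/B)) (the critical radius where t' vanishes). Then for every u ∈ ℝ: t'(u) > 0 if and only if r(u) < R_t; t'(u) = 0 if and only if r(u) = R_t; and t'(u) < 0 if and only if r(u) > R_t. -/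
open Real

/-- The inverse of `cosh` on `[1, ∞)`. -/
noncomputable def arcosh (x : ℝ) : ℝ :=
  Real.log (x + Real.sqrt (x ^ 2 - 1))

/-!
The combinations `P_{ρ₁,ρ₂}` are first integrals of the geodesic equations. Since
`2 P_{2,0} - cosh² r · P_{0,1} = cosh² r · t'` identically, conservation gives
`cosh² r · t' = B (cosh² R_t - cosh² r)` along the whole geodesic, where `cosh² R_t = 2A/B`;
as `cosh²` is strictly increasing on `[0, ∞)` and `B > 0`, the sign of `t'` is that of `R_t - r`.
-/

theorem GodelGeodesicEqns.hasDerivAt_godelP {t r φ z : ℝ → ℝ} (hgeo : GodelGeodesicEqns t r φ z)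
    (ht : TwiceDiff t) (hr : TwiceDiff r) (hφ : TwiceDiff φ) (hrpos : ∀ u, 0 < r u)
    (ρ₁ ρ₂ u : ℝ) : HasDerivAt (godelP t r φ ρ₁ ρ₂) 0 u := by
  obtain ⟨e1, -, e3, -⟩ := hgeo u
  have hc : HasDerivAt (fun v => cosh (r v)) (sinh (r u) * deriv r u) u :=
    (hasDerivAt_cosh _).comp u (hr.1 u).hasDerivAt
  have hs : HasDerivAt (fun v => sinh (r v)) (cosh (r u) * deriv r u) u :=
    (hasDerivAt_sinh _).comp u (hr.1 u).hasDerivAt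
  have H := ((((hc.pow 2).const_mul ρ₁).div_const 2).const_add ρ₂).mul (ht.2 u).hasDerivAt
    |>.add (((((hc.pow 2).const_mul ρ₁).add_const (4 * ρ₂)).mul (hs.pow 2)).div_const
      (2 * √2) |>.mul (hφ.2 u).hasDerivAt)
  refine H.congr_deriv ?_
  have hs0 : sinh (r u) ≠ 0 := (sinh_pos_iff.2 (hrpos u)).ne'
  have hc0 : cosh (r u) ≠ 0 := (cosh_pos _).ne'
  have htt : deriv (deriv t) u = -(4 * sinh (r u) * deriv t u * deriv r u
      + 2 * √2 * sinh (r u) ^ 3 * deriv φ u * deriv r u) / cosh (r u) := by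
    rw [tanh_eq_sinh_div_cosh] at e1
    field_simp at e1 ⊢
    linarith
  have hφφ : deriv (deriv φ) u = 2 * (√2 * deriv t u - deriv φ u) * deriv r u
      / (sinh (r u) * cosh (r u)) := by
    field_simp
    linarith
  have h2 : √2 ^ 2 = 2 := sq_sqrt zero_le_two
  have hcs : cosh (r u) ^ 2 = sinh (r u) ^ 2 + 1 := cosh_sq _
  simp only [Pi.pow_apply, Pi.mul_apply, htt, hφφ]
  field_simp
  -- after clearing denominators only `√2 ^ 2 = 2` and `cosh² = sinh² + 1` are needed
  linear_combination deriv r u * deriv φ u * sinh (r u) *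
    (-(2 * sinh (r u) ^ 2 * (ρ₁ * cosh (r u) ^ 2 + 2 * ρ₂)) * h2
      + (2 * ρ₁ * cosh (r u) ^ 2 + 8 * ρ₂) * hcs)

theorem GodelGeodesicEqns.godelP_eq {t r φ z : ℝ → ℝ} (hgeo : GodelGeodesicEqns t r φ z)
    (ht : TwiceDiff t) (hr : TwiceDiff r) (hφ : TwiceDiff φ) (hrpos : ∀ u, 0 < r u)
    (ρ₁ ρ₂ u v : ℝ) : godelP t r φ ρ₁ ρ₂ u = godelP t r φ ρ₁ ρ₂ v :=
  have h := hgeo.hasDerivAt_godelP ht hr hφ hrpos ρ₁ ρ₂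
  is_const_of_deriv_eq_zero (fun w => (h w).differentiableAt) (fun w => (h w).deriv) u v

theorem cosh_sq_mul_deriv_eq_godelP (t r φ : ℝ → ℝ) (u : ℝ) :
    cosh (r u) ^ 2 * deriv t u =
      2 * godelP t r φ 2 0 u - cosh (r u) ^ 2 * godelP t r φ 0 1 u := by
  simp only [godelP]
  ring

theorem cmp_cosh_sq {a b : ℝ} (ha : 0 ≤ a) (hb : 0 ≤ b) :
    cmp (cosh a ^ 2) (cosh b ^ 2) = cmp a b :=
  ((pow_left_strictMonoOn₀ two_ne_zero).comp cosh_strictMonoOn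
    fun x _ => (cosh_pos x).le).cmp_map_eq ha hb

theorem cmp_zero_eq_cmp_of_cosh_sq_mul_eq {x a b B : ℝ} (hB : 0 < B) (ha : 0 ≤ a) (hb : 0 ≤ b)
    (h : cosh a ^ 2 * x = B * (cosh b ^ 2 - cosh a ^ 2)) : cmp x 0 = cmp b a :=
  calc cmp x 0 = cmp (cosh a ^ 2 * x) (cosh a ^ 2 * 0) :=
        (cmp_mul_pos_left (by positivity) _ _).symm
    _ = cmp (B * (cosh b ^ 2 - cosh a ^ 2)) (B * 0) := by rw [h, mul_zero, mul_zero]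
    _ = cmp (cosh b ^ 2) (cosh a ^ 2) := by rw [cmp_mul_pos_left hB, cmp_sub_zero]
    _ = cmp b a := cmp_cosh_sq hb ha

theorem pos_iff_and_eq_zero_iff_and_neg_iff_of_cmp_eq {α β : Type*} [LinearOrder α] [Zero α]
    [LinearOrder β] {x : α} {a b : β} (h : cmp x 0 = cmp b a) :
    (0 < x ↔ a < b) ∧ (x = 0 ↔ a = b) ∧ (x < 0 ↔ b < a) := by
  refine ⟨?_, ?_, ?_⟩
  · rw [← cmp_eq_gt_iff, h, cmp_eq_gt_iff]
  · rw [← cmp_eq_eq_iff, h, cmp_eq_eq_iff, eq_comm]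
  · rw [← cmp_eq_lt_iff, h, cmp_eq_lt_iff]

theorem godel_critical_radius_general (t r φ z : ℝ → ℝ)
    (ht : TwiceDiff t) (hr : TwiceDiff r) (hφ : TwiceDiff φ)
    (hrpos : ∀ u, 0 < r u)
    (hgeo : GodelGeodesicEqns t r φ z)
    (u₀ : ℝ) (A B : ℝ)
    (hA : A = godelP t r φ 2 0 u₀) (hB : B = godelP t r φ 0 1 u₀)
    (hBpos : 0 < B) (hAB : 1 ≤ 2 * A / B)
    (Rt : ℝ) (hRt : Rt = _root_.arcosh (Real.sqrt (2 * A / B))) :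
    ∀ u : ℝ,
      (0 < deriv t u ↔ r u < Rt)
      ∧ (deriv t u = 0 ↔ r u = Rt)
      ∧ (deriv t u < 0 ↔ Rt < r u) := by
  intro u
  have hsqrt : 1 ≤ √(2 * A / B) := one_le_sqrt.2 hAB
  have hRt_nonneg : 0 ≤ Rt := hRt ▸ Real.arcosh_nonneg hsqrt
  have hcoshRt : cosh Rt = √(2 * A / B) := hRt ▸ Real.cosh_arcosh hsqrt
  have hcons : cosh (r u) ^ 2 * deriv t u = B * (cosh Rt ^ 2 - cosh (r u) ^ 2) := by
    rw [cosh_sq_mul_deriv_eq_godelP t r φ u, hgeo.godelP_eq ht hr hφ hrpos _ _ u u₀,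
      hgeo.godelP_eq ht hr hφ hrpos _ _ u u₀, ← hA, ← hB, hcoshRt, sq_sqrt (by linarith)]
    field_simp
  exact pos_iff_and_eq_zero_iff_and_neg_iff_of_cmp_eq
    (cmp_zero_eq_cmp_of_cosh_sq_mul_eq hBpos (hrpos u).le hRt_nonneg hcons)

/-- With `A = P_{2,0}(u₀)`, `B = P_{0,1}(u₀)`, `B > 0`, `2A/B ≥ 1` and
critical radius `R_t = arcosh √(2A/B)`, the sign of `t'(u)` is determined by the
position of `r(u)` relative to `R_t`. -/
theorem godel_critical_radius (t r φ z : ℝ → ℝ)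
    (ht : TwiceDiff t) (hr : TwiceDiff r) (hφ : TwiceDiff φ) (hz : TwiceDiff z)
    (hrpos : ∀ u, 0 < r u)
    (hgeo : GodelGeodesicEqns t r φ z)
    (u₀ : ℝ) (A B : ℝ)
    (hA : A = godelP t r φ 2 0 u₀) (hB : B = godelP t r φ 0 1 u₀)
    (hBpos : 0 < B) (hAB : 1 ≤ 2 * A / B)
    (Rt : ℝ) (hRt : Rt = _root_.arcosh (Real.sqrt (2 * A / B))) :
    ∀ u : ℝ,
      (0 < deriv t u ↔ r u < Rt)
      ∧ (deriv t u = 0 ↔ r u = Rt)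
      ∧ (deriv t u < 0 ↔ Rt < r u) :=
  godel_critical_radius_general t r φ z ht hr hφ hrpos hgeo u₀ A B hA hB hBpos hAB Rt hRt
end

section
/- Let t, r, φ, z : ℝ → ℝ be a geodesic of Gödel's universe, fix u₀ ∈ ℝ, and set c₁ = C₁(u₀), c₂ = C₂(u₀), A = P_{2,0}(u₀). Then for every u ∈ ℝ, φ'(u) = (2/sinh(2r(u)))·(c₁·cos(φ(u)) − c₂·sin(φ(u))) + A·2√2/cosh(r(u))². -/
/-! Put `X = √2 sinh(2r) t' + (cosh(2r) - 2) sinh(2r) φ' / 2`, so that `C₁ = sin φ · r' - cos φ · X`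
and `C₂ = cos φ · r' + sin φ · X`. The geodesic equations say exactly that the vector `(r', X)`
rotates with angular velocity `φ'`, i.e. `r'' = -φ' X` and `X' = φ' r'`; undoing the rotation by
`φ` makes `C₁` and `C₂` constant. `P_{2,0} = cosh² r (t' + sinh² r · φ' / √2)` is conserved as
well. Finally `C₁ cos φ - C₂ sin φ = -X`, and `-2X / sinh(2r) + 2√2 P_{2,0} / cosh² r = φ'` is an
identity in `t'` and `φ'`. -/
open Real

theorem eq_of_forall_hasDerivAt_zero {f : ℝ → ℝ} (hf : ∀ x, HasDerivAt f 0 x) (x y : ℝ) :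
    f x = f y :=
  is_const_of_deriv_eq_zero (fun x => (hf x).differentiableAt) (fun x => (hf x).deriv) x y

theorem hasDerivAt_sin_mul_sub_cos_mul_of_rotation {φ a b : ℝ → ℝ} {φ' x : ℝ}
    (hφ : HasDerivAt φ φ' x) (ha : HasDerivAt a (-(φ' * b x)) x) (hb : HasDerivAt b (φ' * a x) x) :
    HasDerivAt (fun y => sin (φ y) * a y - cos (φ y) * b y) 0 x :=
  ((hφ.sin.mul ha).sub (hφ.cos.mul hb)).congr_deriv (by ring)

theorem hasDerivAt_cos_mul_add_sin_mul_of_rotation {φ a b : ℝ → ℝ} {φ' x : ℝ}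
    (hφ : HasDerivAt φ φ' x) (ha : HasDerivAt a (-(φ' * b x)) x) (hb : HasDerivAt b (φ' * a x) x) :
    HasDerivAt (fun y => cos (φ y) * a y + sin (φ y) * b y) 0 x :=
  ((hφ.cos.mul ha).add (hφ.sin.mul hb)).congr_deriv (by ring)

noncomputable def godelX (t r φ : ℝ → ℝ) (u : ℝ) : ℝ :=
  √2 * sinh (2 * r u) * deriv t u + (cosh (2 * r u) - 2) * sinh (2 * r u) / 2 * deriv φ u

theorem godelC1_eq (t r φ : ℝ → ℝ) :
    godelC1 t r φ = fun u => sin (φ u) * deriv r u - cos (φ u) * godelX t r φ u := by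
  funext u
  unfold godelC1 godelX
  ring

theorem godelC2_eq (t r φ : ℝ → ℝ) :
    godelC2 t r φ = fun u => cos (φ u) * deriv r u + sin (φ u) * godelX t r φ u := by
  funext u
  unfold godelC2 godelX
  ring

theorem godelP_two_zero (t r φ : ℝ → ℝ) :
    godelP t r φ 2 0 =
      fun u => cosh (r u) ^ 2 * (deriv t u + √2 / 2 * sinh (r u) ^ 2 * deriv φ u) := by
  funext u
  unfold godelP
  have hsqrt : √2 ≠ 0 := by positivity
  field_simp
  linear_combination
    -(cosh (r u) ^ 2 * sinh (r u) ^ 2 * deriv φ u) * sq_sqrt (zero_le_two (α := ℝ))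

theorem GodelGeodesicEqns.cosh_mul_tdd {t r φ z : ℝ → ℝ} (hgeo : GodelGeodesicEqns t r φ z)
    (u : ℝ) :
    cosh (r u) * deriv (deriv t) u + 4 * sinh (r u) * deriv t u * deriv r u
      + 2 * √2 * sinh (r u) ^ 3 * deriv φ u * deriv r u = 0 := by
  have h := (hgeo u).1
  rw [tanh_eq_sinh_div_cosh] at h
  field_simp at h
  linear_combination h

theorem GodelGeodesicEqns.hasDerivAt_deriv_r {t r φ z : ℝ → ℝ} (hgeo : GodelGeodesicEqns t r φ z)
    {u : ℝ} (hr : DifferentiableAt ℝ (deriv r) u) :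
    HasDerivAt (deriv r) (-(deriv φ u * godelX t r φ u)) u := by
  refine hr.hasDerivAt.congr_deriv ?_
  unfold godelX
  rw [sinh_two_mul, cosh_two_mul]
  linear_combination (hgeo u).2.1 - sinh (r u) * cosh (r u) * deriv φ u ^ 2 * cosh_sq (r u)

theorem GodelGeodesicEqns.hasDerivAt_godelX {t r φ z : ℝ → ℝ} (hgeo : GodelGeodesicEqns t r φ z)
    {u : ℝ} (ht : DifferentiableAt ℝ (deriv t) u) (hr : DifferentiableAt ℝ r u)
    (hφ : DifferentiableAt ℝ (deriv φ) u) :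
    HasDerivAt (godelX t r φ) (deriv φ u * deriv r u) u := by
  have hr2 := hr.hasDerivAt.const_mul 2
  have h := (((hr2.sinh.const_mul √2).mul ht.hasDerivAt).add
    ((((hr2.cosh.sub_const 2).mul hr2.sinh).div_const 2).mul hφ.hasDerivAt))
  refine h.congr_deriv ?_
  have e1 := hgeo.cosh_mul_tdd u
  have e3 := (hgeo u).2.2.1
  simp only [Pi.mul_apply, sinh_two_mul, cosh_two_mul]
  linear_combination (2 * √2 * sinh (r u)) * e1 + (cosh (r u) ^ 2 + sinh (r u) ^ 2 - 2) * e3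
    + (4 * √2 * deriv r u * deriv t u
        + deriv r u * deriv φ u * (cosh (r u) ^ 2 + 7 * sinh (r u) ^ 2 - 3)) * cosh_sq (r u)
    - 4 * sinh (r u) ^ 4 * deriv r u * deriv φ u * sq_sqrt (zero_le_two (α := ℝ))

theorem GodelGeodesicEqns.hasDerivAt_godelP_two_zero {t r φ z : ℝ → ℝ}
    (hgeo : GodelGeodesicEqns t r φ z) {u : ℝ} (ht : DifferentiableAt ℝ (deriv t) u)
    (hr : DifferentiableAt ℝ r u) (hφ : DifferentiableAt ℝ (deriv φ) u) :
    HasDerivAt (godelP t r φ 2 0) 0 u := by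
  rw [godelP_two_zero]
  have hs := hr.hasDerivAt.sinh
  have hc := hr.hasDerivAt.cosh
  refine ((hc.pow 2).mul
    (ht.hasDerivAt.add (((hs.pow 2).const_mul (√2 / 2)).mul hφ.hasDerivAt))).congr_deriv ?_
  simp only [Pi.add_apply, Pi.mul_apply, Pi.pow_apply]
  linear_combination cosh (r u) * hgeo.cosh_mul_tdd u
    + √2 / 2 * sinh (r u) * cosh (r u) * (hgeo u).2.2.1
    + √2 * cosh (r u) * sinh (r u) * deriv r u * deriv φ u * cosh_sq (r u)
    + cosh (r u) * sinh (r u) * deriv r u * deriv t u * sq_sqrt (zero_le_two (α := ℝ))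

theorem deriv_eq_godelC_godelP (t r φ : ℝ → ℝ) {u : ℝ} (hru : r u ≠ 0) :
    deriv φ u = 2 / sinh (2 * r u) * (godelC1 t r φ u * cos (φ u) - godelC2 t r φ u * sin (φ u))
      + godelP t r φ 2 0 u * (2 * √2) / cosh (r u) ^ 2 := by
  have hC : godelC1 t r φ u * cos (φ u) - godelC2 t r φ u * sin (φ u) = -godelX t r φ u := by
    rw [godelC1_eq, godelC2_eq]
    linear_combination (-godelX t r φ u) * sin_sq_add_cos_sq (φ u)
  rw [hC, godelP_two_zero]
  unfold godelX
  have hs : sinh (r u) ≠ 0 := sinh_ne_zero.mpr hru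
  have hc : cosh (r u) ≠ 0 := (cosh_pos _).ne'
  rw [sinh_two_mul, cosh_two_mul]
  field_simp
  linear_combination deriv φ u * cosh_sq (r u)
    - deriv φ u * sinh (r u) ^ 2 * sq_sqrt (zero_le_two (α := ℝ))

theorem godel_phidot_formula_c_general (t r φ z : ℝ → ℝ)
    (ht : TwiceDiff t) (hr : TwiceDiff r) (hφ : TwiceDiff φ)
    (hrpos : ∀ u, 0 < r u)
    (hgeo : GodelGeodesicEqns t r φ z)
    (u₀ : ℝ) (c₁ c₂ A : ℝ)
    (hc₁ : c₁ = godelC1 t r φ u₀) (hc₂ : c₂ = godelC2 t r φ u₀)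
    (hA : A = godelP t r φ 2 0 u₀) :
    ∀ u : ℝ, deriv φ u
      = 2 / Real.sinh (2 * r u) * (c₁ * Real.cos (φ u) - c₂ * Real.sin (φ u))
        + A * (2 * Real.sqrt 2) / Real.cosh (r u) ^ 2 := by
  intro u
  have hr' : ∀ v, HasDerivAt (deriv r) (-(deriv φ v * godelX t r φ v)) v :=
    fun v => hgeo.hasDerivAt_deriv_r (hr.2 v)
  have hX : ∀ v, HasDerivAt (godelX t r φ) (deriv φ v * deriv r v) v :=
    fun v => hgeo.hasDerivAt_godelX (ht.2 v) (hr.1 v) (hφ.2 v)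
  have hC₁ : godelC1 t r φ u = c₁ := by
    rw [hc₁, godelC1_eq]
    exact eq_of_forall_hasDerivAt_zero
      (fun v => hasDerivAt_sin_mul_sub_cos_mul_of_rotation (hφ.1 v).hasDerivAt (hr' v) (hX v)) u u₀
  have hC₂ : godelC2 t r φ u = c₂ := by
    rw [hc₂, godelC2_eq]
    exact eq_of_forall_hasDerivAt_zero
      (fun v => hasDerivAt_cos_mul_add_sin_mul_of_rotation (hφ.1 v).hasDerivAt (hr' v) (hX v)) u u₀
  have hP : godelP t r φ 2 0 u = A := hA ▸ eq_of_forall_hasDerivAt_zero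
    (fun v => hgeo.hasDerivAt_godelP_two_zero (ht.2 v) (hr.1 v) (hφ.2 v)) u u₀
  rw [← hC₁, ← hC₂, ← hP]
  exact deriv_eq_godelC_godelP t r φ (hrpos u).ne'

/-- Along a geodesic, `φ' = (2/sinh 2r)·(c₁·cos φ − c₂·sin φ) + A·2√2/cosh(r)²`
with `c₁ = C₁(u₀)`, `c₂ = C₂(u₀)`, `A = P_{2,0}(u₀)`. -/
theorem godel_phidot_formula_c (t r φ z : ℝ → ℝ)
    (ht : TwiceDiff t) (hr : TwiceDiff r) (hφ : TwiceDiff φ) (hz : TwiceDiff z)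
    (hrpos : ∀ u, 0 < r u)
    (hgeo : GodelGeodesicEqns t r φ z)
    (u₀ : ℝ) (c₁ c₂ A : ℝ)
    (hc₁ : c₁ = godelC1 t r φ u₀) (hc₂ : c₂ = godelC2 t r φ u₀)
    (hA : A = godelP t r φ 2 0 u₀) :
    ∀ u : ℝ, deriv φ u
      = 2 / Real.sinh (2 * r u) * (c₁ * Real.cos (φ u) - c₂ * Real.sin (φ u))
        + A * (2 * Real.sqrt 2) / Real.cosh (r u) ^ 2 :=
  godel_phidot_formula_c_general t r φ z ht hr hφ hrpos hgeo u₀ c₁ c₂ A hc₁ hc₂ hA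
end
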